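/- In the call-by-name restriction λμμ̃T (where only covalues E ::= α | v·E | case-sum may be substituted for covariables), the full η law for sum types is unsound: combining the rule η⊕ (case{inl x ⇒ ⟨inl x ‖ e⟩ | inr y ⇒ ⟨inr y ‖ e⟩} → e when the bound variables are not free in e) with the call-by-name β rules breaks confluence. Concretely, for commands c₀, c₁ and unused δ, z, the command ⟨μδ.c₀ ‖ case{inl x ⇒ ⟨inl x ‖ μ̃z.c₁⟩ | inr y ⇒ ⟨inr y ‖ μ̃z.c₁⟩}⟩ reduces to c₀ by βμ-CBN and also reduces (via η⊕ followed by βμ̃-CBN) to c₁. -/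

import Mathlib

/-!  The λμμ̃-calculus (Curien–Herbelin sequent calculus) with sums,
     named (co)variables represented by natural numbers. -/

namespace LMM

mutual
  /-- Terms (producers). -/
  inductive Tm : Type
  | var : Nat → Tm                      -- x
  | mu  : Nat → Cmd → Tm                -- μα.c
  | lam : Nat → Nat → Cmd → Tm          -- λ(x·α).c
  | inl : Tm → Tm
  | inr : Tm → Tm

  /-- Coterms (consumers). -/
  inductive CoTm : Type
  | covar : Nat → CoTm                  -- α
  | mut : Nat → Cmd → CoTm              -- μ̃x.c
  | app : Tm → CoTm → CoTm              -- v·e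
  | caseSum : Nat → Cmd → Nat → Cmd → CoTm  -- case{inl x ⇒ c₁ | inr y ⇒ c₂}

  /-- Commands. -/
  inductive Cmd : Type
  | cut : Tm → CoTm → Cmd               -- ⟨v ‖ e⟩
end

mutual
  /-- Substitution of a term for a (term) variable in a term. -/
  def substVTm : Tm → Nat → Tm → Tm
  | .var y, x, v => if y = x then v else .var y
  | .mu a c, x, v => .mu a (substVCmd c x v)
  | .lam y a c, x, v => if y = x then .lam y a c else .lam y a (substVCmd c x v)
  | .inl t, x, v => .inl (substVTm t x v)
  | .inr t, x, v => .inr (substVTm t x v)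

  def substVCo : CoTm → Nat → Tm → CoTm
  | .covar b, _, _ => .covar b
  | .mut y c, x, v => if y = x then .mut y c else .mut y (substVCmd c x v)
  | .app t e, x, v => .app (substVTm t x v) (substVCo e x v)
  | .caseSum y c1 z c2, x, v =>
      .caseSum y (if y = x then c1 else substVCmd c1 x v)
               z (if z = x then c2 else substVCmd c2 x v)

  def substVCmd : Cmd → Nat → Tm → Cmd
  | .cut t e, x, v => .cut (substVTm t x v) (substVCo e x v)
end

mutual
  /-- Substitution of a coterm for a covariable in a term. -/
  def substETm : Tm → Nat → CoTm → Tm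
  | .var y, _, _ => .var y
  | .mu b c, a, e => if b = a then .mu b c else .mu b (substECmd c a e)
  | .lam y b c, a, e => if b = a then .lam y b c else .lam y b (substECmd c a e)
  | .inl t, a, e => .inl (substETm t a e)
  | .inr t, a, e => .inr (substETm t a e)

  def substECo : CoTm → Nat → CoTm → CoTm
  | .covar b, a, e => if b = a then e else .covar b
  | .mut y c, a, e => .mut y (substECmd c a e)
  | .app t e', a, e => .app (substETm t a e) (substECo e' a e)
  | .caseSum y c1 z c2, a, e => .caseSum y (substECmd c1 a e) z (substECmd c2 a e)

  def substECmd : Cmd → Nat → CoTm → Cmd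
  | .cut t e', a, e => .cut (substETm t a e) (substECo e' a e)
end

mutual
  /-- Free (term) variables. -/
  def fvTm : Tm → List Nat
  | .var y => [y]
  | .mu _ c => fvCmd c
  | .lam y _ c => (fvCmd c).filter (· ≠ y)
  | .inl t => fvTm t
  | .inr t => fvTm t

  def fvCo : CoTm → List Nat
  | .covar _ => []
  | .mut y c => (fvCmd c).filter (· ≠ y)
  | .app t e => fvTm t ++ fvCo e
  | .caseSum y c1 z c2 => (fvCmd c1).filter (· ≠ y) ++ (fvCmd c2).filter (· ≠ z)

  def fvCmd : Cmd → List Nat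
  | .cut t e => fvTm t ++ fvCo e
end

mutual
  /-- Free covariables. -/
  def fcvTm : Tm → List Nat
  | .var _ => []
  | .mu b c => (fcvCmd c).filter (· ≠ b)
  | .lam _ b c => (fcvCmd c).filter (· ≠ b)
  | .inl t => fcvTm t
  | .inr t => fcvTm t

  def fcvCo : CoTm → List Nat
  | .covar b => [b]
  | .mut _ c => fcvCmd c
  | .app t e => fcvTm t ++ fcvCo e
  | .caseSum _ c1 _ c2 => fcvCmd c1 ++ fcvCmd c2

  def fcvCmd : Cmd → List Nat
  | .cut t e => fcvTm t ++ fcvCo e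
end

end LMM

namespace LMM

/-- Covalues of the call-by-name sub-calculus λμμ̃T:
    E ::= α | v·E | case{inl x ⇒ c₁ | inr y ⇒ c₂}. -/
inductive IsCoval : CoTm → Prop
| covar (a : Nat) : IsCoval (.covar a)
| app (v : Tm) {e : CoTm} : IsCoval e → IsCoval (.app v e)
| caseSum (x : Nat) (c₁ : Cmd) (y : Nat) (c₂ : Cmd) : IsCoval (.caseSum x c₁ y c₂)

/-- Reduction of the call-by-name calculus λμμ̃T extended with the full η law
    for sums:
    * βμ-CBN:  ⟨μα.c ‖ E⟩ → c[E/α]   (only for covalues E),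
    * βμ̃-CBN:  ⟨v ‖ μ̃x.c⟩ → c[v/x]  (any term v),
    * β→-CBN, β⊕-CBN,
    * η⊕: case{inl x ⇒ ⟨inl x ‖ e⟩ | inr y ⇒ ⟨inr y ‖ e⟩} → e  when x,y ∉ FV(e). -/
inductive RedT : Cmd → Cmd → Prop
| betaMu {e : CoTm} (a : Nat) (c : Cmd) :
    IsCoval e → RedT (.cut (.mu a c) e) (substECmd c a e)
| betaMut (v : Tm) (x : Nat) (c : Cmd) :
    RedT (.cut v (.mut x c)) (substVCmd c x v)
| betaArrow {E : CoTm} (x a : Nat) (c : Cmd) (v : Tm) :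
    IsCoval E →
    RedT (.cut (.lam x a c) (.app v E)) (substECmd (substVCmd c x v) a E)
| betaSumL (v : Tm) (x y : Nat) (c₁ c₂ : Cmd) :
    RedT (.cut (.inl v) (.caseSum x c₁ y c₂)) (substVCmd c₁ x v)
| betaSumR (v : Tm) (x y : Nat) (c₁ c₂ : Cmd) :
    RedT (.cut (.inr v) (.caseSum x c₁ y c₂)) (substVCmd c₂ y v)
| etaSum {e : CoTm} (v : Tm) (x y : Nat) :
    x ∉ fvCo e → y ∉ fvCo e →
    RedT (.cut v (.caseSum x (.cut (.inl (.var x)) e) y (.cut (.inr (.var y)) e)))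
         (.cut v e)

/-! The critical pair behind the theorem: the case abstraction is a covalue, so βμ-CBN lets the
vacuous binder μδ swallow it and return c₀; but η⊕ first contracts it to μ̃z.c₁, against which
βμ̃-CBN fires for any term, discarding μδ.c₀ and returning c₁. -/

theorem notMem_of_notMem_filter_ne {α : Type*} [DecidableEq α] {l : List α} {a b : α}
    (h : a ∉ l.filter (· ≠ b)) (hba : b ≠ a) : a ∉ l :=
  fun ha => h (List.mem_filter.2 ⟨ha, by simpa using hba.symm⟩)

mutual
theorem substETm_of_notMem (t : Tm) {a : Nat} (e : CoTm) (h : a ∉ fcvTm t) :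
    substETm t a e = t := by
  match t with
  | .var _ => rfl
  | .mu b c | .lam _ b c =>
    by_cases hb : b = a
    · simp [substETm, hb]
    · simp [substETm, hb, substECmd_of_notMem c e (notMem_of_notMem_filter_ne h hb)]
  | .inl t | .inr t =>
    simp [substETm, substETm_of_notMem t e h]

theorem substECo_of_notMem (e' : CoTm) {a : Nat} (e : CoTm) (h : a ∉ fcvCo e') :
    substECo e' a e = e' := by
  match e' with
  | .covar b =>
    have hb : b ≠ a := fun hb => h (by simp [fcvCo, hb])
    simp [substECo, hb]
  | .mut _ c =>
    simp [substECo, substECmd_of_notMem c e h]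
  | .app t e' =>
    simp only [fcvCo, List.mem_append, not_or] at h
    simp [substECo, substETm_of_notMem t e h.1, substECo_of_notMem e' e h.2]
  | .caseSum _ c₁ _ c₂ =>
    simp only [fcvCo, List.mem_append, not_or] at h
    simp [substECo, substECmd_of_notMem c₁ e h.1, substECmd_of_notMem c₂ e h.2]

theorem substECmd_of_notMem (c : Cmd) {a : Nat} (e : CoTm) (h : a ∉ fcvCmd c) :
    substECmd c a e = c := by
  match c with
  | .cut t e' =>
    simp only [fcvCmd, List.mem_append, not_or] at h
    simp [substECmd, substETm_of_notMem t e h.1, substECo_of_notMem e' e h.2]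
end

mutual
theorem substVTm_of_notMem (t : Tm) {x : Nat} (v : Tm) (h : x ∉ fvTm t) :
    substVTm t x v = t := by
  match t with
  | .var y =>
    have hy : y ≠ x := fun hy => h (by simp [fvTm, hy])
    simp [substVTm, hy]
  | .mu _ c =>
    simp [substVTm, substVCmd_of_notMem c v h]
  | .lam y _ c =>
    by_cases hy : y = x
    · simp [substVTm, hy]
    · simp [substVTm, hy, substVCmd_of_notMem c v (notMem_of_notMem_filter_ne h hy)]
  | .inl t | .inr t =>
    simp [substVTm, substVTm_of_notMem t v h]

theorem substVCo_of_notMem (e : CoTm) {x : Nat} (v : Tm) (h : x ∉ fvCo e) :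
    substVCo e x v = e := by
  match e with
  | .covar _ => rfl
  | .mut y c =>
    by_cases hy : y = x
    · simp [substVCo, hy]
    · simp [substVCo, hy, substVCmd_of_notMem c v (notMem_of_notMem_filter_ne h hy)]
  | .app t e =>
    simp only [fvCo, List.mem_append, not_or] at h
    simp [substVCo, substVTm_of_notMem t v h.1, substVCo_of_notMem e v h.2]
  | .caseSum y c₁ z c₂ =>
    simp only [fvCo, List.mem_append, not_or] at h
    have h₁ : y ≠ x → substVCmd c₁ x v = c₁ := fun hy =>
      substVCmd_of_notMem c₁ v (notMem_of_notMem_filter_ne h.1 hy)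
    have h₂ : z ≠ x → substVCmd c₂ x v = c₂ := fun hz =>
      substVCmd_of_notMem c₂ v (notMem_of_notMem_filter_ne h.2 hz)
    simp only [substVCo]
    split_ifs with hy hz hz
    · rfl
    · rw [h₂ hz]
    · rw [h₁ hy]
    · rw [h₁ hy, h₂ hz]

theorem substVCmd_of_notMem (c : Cmd) {x : Nat} (v : Tm) (h : x ∉ fvCmd c) :
    substVCmd c x v = c := by
  match c with
  | .cut t e =>
    simp only [fvCmd, List.mem_append, not_or] at h
    simp [substVCmd, substVTm_of_notMem t v h.1, substVCo_of_notMem e v h.2]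
end

theorem RedT.betaMu_of_notMem {e : CoTm} {a : Nat} {c : Cmd} (he : IsCoval e)
    (ha : a ∉ fcvCmd c) : RedT (.cut (.mu a c) e) c := by
  simpa only [substECmd_of_notMem c e ha] using RedT.betaMu a c he

theorem RedT.betaMut_of_notMem (v : Tm) {x : Nat} {c : Cmd} (hx : x ∉ fvCmd c) :
    RedT (.cut v (.mut x c)) c := by
  simpa only [substVCmd_of_notMem c v hx] using RedT.betaMut v x c

theorem notMem_fvCo_mut {x : Nat} (z : Nat) {c : Cmd} (hx : x ∉ fvCmd c) :
    x ∉ fvCo (.mut z c) := by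
  simp [fvCo, hx]

/-- in call-by-name λμμ̃T the full η law for sums is unsound:
    for any commands c₀, c₁ with δ, z unused (and the case variables x, y not
    free in c₁), the command
    ⟨μδ.c₀ ‖ case{inl x ⇒ ⟨inl x ‖ μ̃z.c₁⟩ | inr y ⇒ ⟨inr y ‖ μ̃z.c₁⟩}⟩
    reduces to c₀ by βμ-CBN and also reduces, via η⊕ followed by βμ̃-CBN, to c₁. -/
theorem lmmT_eta_sum_unsound :
    ∀ (c₀ c₁ : Cmd) (x y z d : Nat),
      d ∉ fcvCmd c₀ → z ∉ fvCmd c₁ → x ∉ fvCmd c₁ → y ∉ fvCmd c₁ →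
      RedT (.cut (.mu d c₀)
              (.caseSum x (.cut (.inl (.var x)) (.mut z c₁))
                        y (.cut (.inr (.var y)) (.mut z c₁)))) c₀ ∧
      Relation.ReflTransGen RedT
        (.cut (.mu d c₀)
            (.caseSum x (.cut (.inl (.var x)) (.mut z c₁))
                      y (.cut (.inr (.var y)) (.mut z c₁)))) c₁ := by
  intro c₀ c₁ x y z d hd hz hx hy
  exact ⟨.betaMu_of_notMem (.caseSum _ _ _ _) hd,
    .head (.etaSum _ x y (notMem_fvCo_mut z hx) (notMem_fvCo_mut z hy))
      (.single (.betaMut_of_notMem _ hz))⟩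

end LMM
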